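/- arXiv:math/9911213 — 6 statements merged into one kernel-verified Lean document; each statement's English description precedes it below -/
import Mathlib

section
/- For G(u) = u + u^2 - 2u^3, H = G', and ρ ∈ [0, 1/6), the point ρ* = (1-2ρ)/4 is the unique zero in (ρ, 1] of the function u ↦ S[u; ρ] - H(u), where S[u;ρ] = (G(ρ) - G(u))/(ρ - u). -/
theorem secant_slope_sub_deriv_cubic {a b c d ρ u : ℝ} (h : ρ ≠ u) :
    ((d + a*ρ + b*ρ^2 + c*ρ^3) - (d + a*u + b*u^2 + c*u^3)) / (ρ - u)
      - (a + 2*b*u + 3*c*u^2) = (ρ - u) * (b + c*(ρ + 2*u)) := by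
  field_simp [sub_ne_zero.mpr h]
  ring

theorem stmt_5_general (G H : ℝ → ℝ) (hG : ∀ u, G u = u + u^2 - 2*u^3)
    (hH : ∀ u, H u = 1 + 2*u - 6*u^2)
    (ρ : ℝ) :
    ∀ u ∈ Set.Ioc ρ (1:ℝ), ((G ρ - G u) / (ρ - u) - H u = 0 ↔ u = (1 - 2*ρ)/4) := by
  intro u hu
  have hρu : ρ ≠ u := hu.1.ne
  have key : (G ρ - G u) / (ρ - u) - H u = (ρ - u) * (1 + (-2)*(ρ + 2*u)) := by
    rw [← secant_slope_sub_deriv_cubic (a := 1) (d := 0) hρu, hG, hG, hH]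
    ring_nf
  rw [key, mul_eq_zero, sub_eq_zero, or_iff_right hρu]
  constructor <;> intro h <;> linarith

theorem stmt_5 (G H : ℝ → ℝ) (hG : ∀ u, G u = u + u^2 - 2*u^3)
    (hH : ∀ u, H u = 1 + 2*u - 6*u^2)
    (ρ : ℝ) (hρ : ρ ∈ Set.Ico (0:ℝ) (1/6)) :
    ∀ u ∈ Set.Ioc ρ (1:ℝ), ((G ρ - G u) / (ρ - u) - H u = 0 ↔ u = (1 - 2*ρ)/4) :=
  stmt_5_general G H hG hH ρ
end

section
/- For G(u) = u + u^2 - 2u^3, if ρ < 1/6 and ρ < λ < ρ* = (1-2ρ)/4, then for every α ∈ (ρ, λ), (G(λ) - G(α))/(λ - α) ≥ (G(λ) - G(ρ))/(λ - ρ). -/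
lemma slope_cubic {a b : ℝ} (hab : a ≠ b) :
    slope (fun u : ℝ => u + u^2 - 2*u^3) a b = 1 + (a + b) - 2*(a^2 + a*b + b^2) := by
  rw [slope_def_field, div_eq_iff (sub_ne_zero.2 hab.symm)]
  ring

lemma slope_cubic_le_slope_cubic {a b c : ℝ} (hca : c ≤ a) (hab : a ≠ b) (hcb : c ≠ b)
    (hsum : 2 * (a + b + c) ≤ 1) :
    slope (fun u : ℝ => u + u^2 - 2*u^3) c b ≤ slope (fun u : ℝ => u + u^2 - 2*u^3) a b := by
  have key : slope (fun u : ℝ => u + u^2 - 2*u^3) a b - slope (fun u : ℝ => u + u^2 - 2*u^3) c b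
      = (a - c) * (1 - 2 * (a + b + c)) := by
    rw [slope_cubic hab, slope_cubic hcb]
    ring
  linarith [mul_nonneg (sub_nonneg.2 hca) (sub_nonneg.2 hsum)]

theorem stmt_6_general (G : ℝ → ℝ) (hG : ∀ u, G u = u + u^2 - 2*u^3)
    (ρ lam : ℝ) (h1 : ρ < lam) (h2 : lam < (1 - 2*ρ)/4) :
    ∀ α ∈ Set.Ioo ρ lam,
      (G lam - G α) / (lam - α) ≥ (G lam - G ρ) / (lam - ρ) := by
  rintro α ⟨hρα, hαlam⟩
  rw [ge_iff_le, ← slope_def_field G, ← slope_def_field G]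
  obtain rfl : G = fun u => u + u^2 - 2*u^3 := funext hG
  exact slope_cubic_le_slope_cubic hρα.le hαlam.ne h1.ne (by linarith)

theorem stmt_6 (G : ℝ → ℝ) (hG : ∀ u, G u = u + u^2 - 2*u^3)
    (ρ lam : ℝ) (hρ : ρ < 1/6) (h1 : ρ < lam) (h2 : lam < (1 - 2*ρ)/4) :
    ∀ α ∈ Set.Ioo ρ lam,
      (G lam - G α) / (lam - α) ≥ (G lam - G ρ) / (lam - ρ) :=
  stmt_6_general G hG ρ lam h1 h2
end

section
/- For G(u) = u + u^2 - 2u^3, H = G', and ρ < 1/6 with ρ* = (1-2ρ)/4: for all α ∈ [ρ, ρ*], G(α) - G(ρ) ≤ H(ρ*)·(α - ρ), and for all α ∈ [ρ*, 1], G(α) - G(ρ*) ≤ H(ρ*)·(α - ρ*). -/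
/-!
The cubic `G` has leading coefficient `-2` and `u²`-coefficient `1`, so its three intersections
with any line sum to `1/2`. The tangent at `c` therefore meets `G` again at `1/2 - 2c`, and
`G α` lies below it exactly when `α ≥ 1/2 - 2c`. For `c = ρ* = (1 - 2ρ)/4` this second
intersection is `ρ`, so the tangent at `ρ*` is the line through `(ρ, G ρ)` of slope `H ρ*`, and
both inequalities say that `G` lies below this line on `[ρ, ∞) ⊇ [ρ*, ∞)`.
-/

section TangentLine

variable {G H : ℝ → ℝ} (hG : ∀ u, G u = u + u^2 - 2*u^3) (hH : ∀ u, H u = 1 + 2*u - 6*u^2)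
include hG hH

theorem sub_sub_tangent_eq (c α : ℝ) :
    G α - G c - H c * (α - c) = -(α - c)^2 * (2*α + 4*c - 1) := by
  rw [hG, hG, hH]
  ring

theorem sub_le_tangent_of_le {c α : ℝ} (h : 1 ≤ 2*α + 4*c) : G α - G c ≤ H c * (α - c) := by
  have := sub_sub_tangent_eq hG hH c α
  nlinarith [sq_nonneg (α - c)]

theorem tangent_meets_at (ρ : ℝ) :
    G ρ - G ((1 - 2*ρ)/4) = H ((1 - 2*ρ)/4) * (ρ - (1 - 2*ρ)/4) := by
  have := sub_sub_tangent_eq hG hH ((1 - 2*ρ)/4) ρ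
  linarith

end TangentLine

theorem stmt_8_general (G H : ℝ → ℝ) (hG : ∀ u, G u = u + u^2 - 2*u^3)
    (hH : ∀ u, H u = 1 + 2*u - 6*u^2)
    (ρ : ℝ) (hρ : ρ < 1/6) :
    (∀ α ∈ Set.Icc ρ ((1 - 2*ρ)/4), G α - G ρ ≤ H ((1 - 2*ρ)/4) * (α - ρ)) ∧
    (∀ α ∈ Set.Icc ((1 - 2*ρ)/4) (1:ℝ),
        G α - G ((1 - 2*ρ)/4) ≤ H ((1 - 2*ρ)/4) * (α - (1 - 2*ρ)/4)) := by
  have below_tangent : ∀ α, ρ ≤ α →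
      G α - G ((1 - 2*ρ)/4) ≤ H ((1 - 2*ρ)/4) * (α - (1 - 2*ρ)/4) :=
    fun α hα => sub_le_tangent_of_le hG hH (by linarith)
  have meets := tangent_meets_at hG hH ρ
  refine ⟨fun α hα => ?_, fun α hα => below_tangent α (by linarith [hα.1])⟩
  linarith [below_tangent α hα.1]

theorem stmt_8 (G H : ℝ → ℝ) (hG : ∀ u, G u = u + u^2 - 2*u^3)
    (hH : ∀ u, H u = 1 + 2*u - 6*u^2)
    (ρ : ℝ) (hρ0 : 0 ≤ ρ) (hρ : ρ < 1/6) :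
    (∀ α ∈ Set.Icc ρ ((1 - 2*ρ)/4), G α - G ρ ≤ H ((1 - 2*ρ)/4) * (α - ρ)) ∧
    (∀ α ∈ Set.Icc ((1 - 2*ρ)/4) (1:ℝ),
        G α - G ((1 - 2*ρ)/4) ≤ H ((1 - 2*ρ)/4) * (α - (1 - 2*ρ)/4)) :=
  stmt_8_general G H hG hH ρ hρ
end

section
/- Let G(u) = u + u^2 - 2u^3, H = G', h2(x) = (1/6)(1+√(7-6x)), and let ρ < 1/6, ρ* = (1-2ρ)/4 < λ ≤ 1. If H(λ) < v < H(ρ*) and θ = h2(v), then G(θ) - vθ = max{G(α) - vα : α ∈ [ρ, λ]}, and the maximizer is unique. -/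
/-! Since `v = H θ` is the slope of `G` at `θ = h2 v` and `G` is cubic,
`G θ - v θ - (G α - v α) = (θ - α)² (4θ + 2α - 1)`. The hypothesis `v < H ρ*` gives `θ > ρ* = (1 - 2ρ)/4`,
so the last factor is positive for every `α ≥ ρ`. -/

lemma tangent_gap_eq {G H : ℝ → ℝ} (hG : ∀ u, G u = u + u^2 - 2*u^3)
    (hH : ∀ u, H u = 1 + 2*u - 6*u^2) (θ α : ℝ) :
    G θ - H θ * θ - (G α - H θ * α) = (θ - α)^2 * (4*θ + 2*α - 1) := by
  rw [hG, hG, hH]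
  ring

lemma tangent_gap_pos {G H : ℝ → ℝ} (hG : ∀ u, G u = u + u^2 - 2*u^3)
    (hH : ∀ u, H u = 1 + 2*u - 6*u^2) {θ α v : ℝ} (hv : H θ = v) (hpos : 1 < 4*θ + 2*α)
    (hne : α ≠ θ) : G α - v * α < G θ - v * θ := by
  subst hv
  have hgap := tangent_gap_eq hG hH θ α
  have : 0 < (θ - α)^2 * (4*θ + 2*α - 1) :=
    mul_pos (sq_pos_of_ne_zero (sub_ne_zero.mpr hne.symm)) (by linarith)
  linarith

lemma H_le_seven_div_six {H : ℝ → ℝ} (hH : ∀ u, H u = 1 + 2*u - 6*u^2) (t : ℝ) : H t ≤ 7/6 := by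
  rw [hH]
  nlinarith [sq_nonneg (6*t - 1)]

lemma H_h2 {H h2 : ℝ → ℝ} (hH : ∀ u, H u = 1 + 2*u - 6*u^2)
    (hh2 : ∀ x, h2 x = (1/6) * (1 + Real.sqrt (7 - 6*x))) {v : ℝ} (hv : v ≤ 7/6) :
    H (h2 v) = v := by
  have hsq := Real.sq_sqrt (show 0 ≤ 7 - 6*v by linarith)
  rw [hH, hh2]
  linear_combination (-1/6 : ℝ) * hsq

lemma lt_h2_of_lt_H {H h2 : ℝ → ℝ} (hH : ∀ u, H u = 1 + 2*u - 6*u^2)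
    (hh2 : ∀ x, h2 x = (1/6) * (1 + Real.sqrt (7 - 6*x))) {t v : ℝ} (hv : v < H t) :
    t < h2 v := by
  rw [hH] at hv
  -- `(6t - 1)² = 7 - 6 H t`
  have : 6*t - 1 < Real.sqrt (7 - 6*v) := Real.lt_sqrt_of_sq_lt (by linarith)
  rw [hh2]
  linarith

theorem stmt_10_general (G H h2 : ℝ → ℝ) (hG : ∀ u, G u = u + u^2 - 2*u^3)
    (hH : ∀ u, H u = 1 + 2*u - 6*u^2)
    (hh2 : ∀ x, h2 x = (1/6) * (1 + Real.sqrt (7 - 6*x)))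
    (ρ lam v : ℝ)
    (hv2 : v < H ((1 - 2*ρ)/4)) :
    (∀ α ∈ Set.Icc ρ lam, G α - v*α ≤ G (h2 v) - v * h2 v) ∧
    (∀ α ∈ Set.Icc ρ lam, G α - v*α = G (h2 v) - v * h2 v → α = h2 v) := by
  have hslope : H (h2 v) = v := H_h2 hH hh2 (hv2.le.trans (H_le_seven_div_six hH _))
  have hθ : (1 - 2*ρ)/4 < h2 v := lt_h2_of_lt_H hH hh2 hv2
  have hgap : ∀ α, ρ ≤ α → α ≠ h2 v → G α - v*α < G (h2 v) - v * h2 v := fun α hα hne =>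
    tangent_gap_pos hG hH hslope (by linarith) hne
  refine ⟨fun α hα => ?_, fun α hα heq => ?_⟩
  · rcases eq_or_ne α (h2 v) with rfl | hne
    · exact le_rfl
    · exact (hgap α hα.1 hne).le
  · by_contra hne
    exact (hgap α hα.1 hne).ne heq

theorem stmt_10 (G H h2 : ℝ → ℝ) (hG : ∀ u, G u = u + u^2 - 2*u^3)
    (hH : ∀ u, H u = 1 + 2*u - 6*u^2)
    (hh2 : ∀ x, h2 x = (1/6) * (1 + Real.sqrt (7 - 6*x)))
    (ρ lam v : ℝ) (hρ0 : 0 ≤ ρ) (hρ : ρ < 1/6)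
    (hstar : (1 - 2*ρ)/4 < lam) (hlam : lam ≤ 1)
    (hv1 : H lam < v) (hv2 : v < H ((1 - 2*ρ)/4)) :
    (∀ α ∈ Set.Icc ρ lam, G α - v*α ≤ G (h2 v) - v * h2 v) ∧
    (∀ α ∈ Set.Icc ρ lam, G α - v*α = G (h2 v) - v * h2 v → α = h2 v) :=
  stmt_10_general G H h2 hG hH hh2 ρ lam v hv2
end

section
/- Let G(u) = u + u^2 - 2u^3, H = G', ρ < 1/6, ρ* = (1-2ρ)/4 < λ ≤ 1. If γ is a probability measure on [ρ, λ] and u > H(ρ*) satisfies u·∫(α - ρ) dγ(α) ≤ ∫(G(α) - G(ρ)) dγ(α), then γ is the Dirac measure at ρ. -/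
/-!
With `ρ* = (1 - 2ρ)/4` one has the identity
`H ρ* (α - ρ) - (G α - G ρ) = 2 (α - ρ) (α - ρ*)²`, so `G α - G ρ ≤ H ρ* (α - ρ)` for every `α ≥ ρ`.
Integrating against `γ` gives `u I ≤ H ρ* I` with `I = ∫ (α - ρ) dγ ≥ 0`; as `u > H ρ*`, `I = 0`,
so `α = ρ` for `γ`-almost every `α`.
-/

open MeasureTheory

theorem cubic_sub_le_slope_mul_sub {ρ α : ℝ} (hα : ρ ≤ α) :
    (α + α^2 - 2*α^3) - (ρ + ρ^2 - 2*ρ^3)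
      ≤ (1 + 2*((1 - 2*ρ)/4) - 6*((1 - 2*ρ)/4)^2) * (α - ρ) := by
  have hgap : (1 + 2*((1 - 2*ρ)/4) - 6*((1 - 2*ρ)/4)^2) * (α - ρ)
      - ((α + α^2 - 2*α^3) - (ρ + ρ^2 - 2*ρ^3)) = 2 * (α - ρ) * (α - (1 - 2*ρ)/4)^2 := by
    ring
  linarith [mul_nonneg (sub_nonneg.2 hα) (sq_nonneg (α - (1 - 2*ρ)/4))]

theorem Continuous.integrable_of_ae_mem_compact {X : Type*} [TopologicalSpace X] [T2Space X]
    [MeasurableSpace X] [OpensMeasurableSpace X] {μ : Measure X} [IsFiniteMeasure μ]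
    {K : Set X} (hK : IsCompact K) (hμK : ∀ᵐ x ∂μ, x ∈ K) {f : X → ℝ} (hf : Continuous f) :
    Integrable f μ := by
  have hK_int : IntegrableOn f K μ := hf.continuousOn.integrableOn_compact hK
  rwa [IntegrableOn, Measure.restrict_eq_self_of_ae_mem hμK] at hK_int

theorem MeasureTheory.Measure.eq_dirac_of_ae_le_of_integral_sub_nonpos {μ : Measure ℝ} [IsProbabilityMeasure μ]
    {a : ℝ} (hle : ∀ᵐ x ∂μ, a ≤ x) (hint : Integrable (fun x => x - a) μ)
    (h : ∫ x, (x - a) ∂μ ≤ 0) : μ = Measure.dirac a := by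
  have hnonneg : 0 ≤ᵐ[μ] fun x => x - a := by
    filter_upwards [hle] with x hx using sub_nonneg.2 hx
  have hzero : ∫ x, (x - a) ∂μ = 0 := le_antisymm h (integral_nonneg_of_ae hnonneg)
  have hae : (id : ℝ → ℝ) =ᵐ[μ] fun _ => a := by
    filter_upwards [(integral_eq_zero_iff_of_nonneg_ae hnonneg hint).1 hzero] with x hx
    exact sub_eq_zero.1 hx
  simpa using (ProbabilityTheory.hasLaw_dirac_of_ae_eq hae).map_eq

theorem stmt_12_general (G H : ℝ → ℝ) (hG : ∀ u, G u = u + u^2 - 2*u^3)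
    (hH : ∀ u, H u = 1 + 2*u - 6*u^2)
    (ρ lam u : ℝ)
    (γ : Measure ℝ) [IsProbabilityMeasure γ]
    (hsupp : γ (Set.Icc ρ lam)ᶜ = 0)
    (hu : H ((1 - 2*ρ)/4) < u)
    (hineq : u * ∫ α, (α - ρ) ∂γ ≤ ∫ α, (G α - G ρ) ∂γ) :
    γ = Measure.dirac ρ := by
  have hmem : ∀ᵐ α ∂γ, α ∈ Set.Icc ρ lam := ae_iff.2 hsupp
  have hG_cont : Continuous G := by
    rw [funext hG]
    fun_prop
  have hint_id := (continuous_id.sub continuous_const).integrable_of_ae_mem_compact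
    isCompact_Icc hmem (μ := γ) (f := fun α => α - ρ)
  have hint_G := (hG_cont.sub continuous_const).integrable_of_ae_mem_compact
    isCompact_Icc hmem (μ := γ) (f := fun α => G α - G ρ)
  have hchord : ∫ α, (G α - G ρ) ∂γ ≤ H ((1 - 2*ρ)/4) * ∫ α, (α - ρ) ∂γ := by
    rw [← integral_const_mul]
    refine integral_mono_ae hint_G (hint_id.const_mul _) ?_
    filter_upwards [hmem] with α hα
    simpa only [hG, hH] using cubic_sub_le_slope_mul_sub hα.1
  have hI_nonneg : 0 ≤ ∫ α, (α - ρ) ∂γ :=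
    integral_nonneg_of_ae (by filter_upwards [hmem] with α hα using sub_nonneg.2 hα.1)
  refine Measure.eq_dirac_of_ae_le_of_integral_sub_nonpos
    (by filter_upwards [hmem] with α hα using hα.1) hint_id ?_
  nlinarith

theorem stmt_12 (G H : ℝ → ℝ) (hG : ∀ u, G u = u + u^2 - 2*u^3)
    (hH : ∀ u, H u = 1 + 2*u - 6*u^2)
    (ρ lam u : ℝ) (hρ0 : 0 ≤ ρ) (hρ : ρ < 1/6)
    (hstar : (1 - 2*ρ)/4 < lam) (hlam : lam ≤ 1)
    (γ : Measure ℝ) [IsProbabilityMeasure γ]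
    (hsupp : γ (Set.Icc ρ lam)ᶜ = 0)
    (hu : H ((1 - 2*ρ)/4) < u)
    (hineq : u * ∫ α, (α - ρ) ∂γ ≤ ∫ α, (G α - G ρ) ∂γ) :
    γ = Measure.dirac ρ :=
  stmt_12_general G H hG hH ρ lam u γ hsupp hu hineq
end

section
/- With G(u) = u + u^2 - 2u^3, H = G', h2 the inverse of H on (1/6,∞), ρ < 1/6, ρ* = (1-2ρ)/4 < λ ≤ 1, and u1 < H(λ) < H(ρ*) < v1: the function u(x) defined by u(x) = λ for x ≤ H(λ), u(x) = h2(x) for H(λ) < x ≤ H(ρ*), and u(x) = ρ for x > H(ρ*), satisfies ∫_{u1}^{v1} u(x) dx = v1·ρ - u1·λ - G(ρ) + G(λ). -/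
theorem stmt_13 (G H h2 : ℝ → ℝ) (hG : ∀ u, G u = u + u^2 - 2*u^3)
    (hH : ∀ u, H u = 1 + 2*u - 6*u^2)
    (hh2 : ∀ x, h2 x = (1/6) * (1 + Real.sqrt (7 - 6*x)))
    (ρ lam u1 v1 : ℝ) (hρ0 : 0 ≤ ρ) (hρ : ρ < 1/6)
    (hstar : (1 - 2*ρ)/4 < lam) (hlam : lam ≤ 1)
    (hu1 : u1 < H lam) (hv1 : H ((1 - 2*ρ)/4) < v1)
    (u : ℝ → ℝ)
    (hu : ∀ x, u x = if x ≤ H lam then lam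
        else if x ≤ H ((1 - 2*ρ)/4) then h2 x else ρ) :
    ∫ x in u1..v1, u x = v1 * ρ - u1 * lam - G ρ + G lam := by
  set r : ℝ := (1 - 2*ρ)/4 with hr
  set a : ℝ := H lam with ha
  set b : ℝ := H r with hb
  have hr16 : 1/6 < r := by rw [hr]; linarith
  have hlam16 : 1/6 < lam := lt_trans hr16 hstar
  have hab : a < b := by rw [ha, hb, hH, hH]; nlinarith
  have h2eq : h2 = fun x => (1/6) * (1 + Real.sqrt (7 - 6*x)) := funext hh2
  -- sqrt computations
  have hsa : Real.sqrt (7 - 6*a) = 6*lam - 1 := by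
    rw [ha, hH, show 7 - 6*(1 + 2*lam - 6*lam^2) = (6*lam - 1)^2 by ring]
    exact Real.sqrt_sq (by linarith)
  have hsb : Real.sqrt (7 - 6*b) = 6*r - 1 := by
    rw [hb, hH, show 7 - 6*(1 + 2*r - 6*r^2) = (6*r - 1)^2 by ring]
    exact Real.sqrt_sq (by linarith)
  have h2a : h2 a = lam := by rw [hh2, hsa]; ring
  -- integrability
  have hch2 : Continuous h2 := by
    rw [h2eq]
    fun_prop
  have i1 : IntervalIntegrable u MeasureTheory.volume u1 a := by
    refine (intervalIntegrable_const (c := lam)).congr ?_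
    intro x hx
    rcases Set.mem_uIoc.1 hx with h | h
    · rw [hu, if_pos h.2]
    · rw [hu, if_pos (h.2.trans (le_of_lt hu1))]
  have i2 : IntervalIntegrable u MeasureTheory.volume a b := by
    refine (hch2.intervalIntegrable a b).congr ?_
    intro x hx
    rcases Set.mem_uIoc.1 hx with h | h
    · rw [hu, if_neg (not_le.2 h.1), if_pos h.2]
    · exact absurd hab (not_lt.2 (le_of_lt (h.1.trans_le h.2)))
  have i3 : IntervalIntegrable u MeasureTheory.volume b v1 := by
    refine (intervalIntegrable_const (c := ρ)).congr ?_
    intro x hx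
    rcases Set.mem_uIoc.1 hx with h | h
    · rw [hu, if_neg (not_le.2 (hab.trans h.1)), if_neg (not_le.2 h.1)]
    · exact absurd hv1 (not_lt.2 (le_of_lt (h.1.trans_le h.2)))
  -- split the integral
  rw [← intervalIntegral.integral_add_adjacent_intervals i1 (i2.trans i3),
      ← intervalIntegral.integral_add_adjacent_intervals i2 i3]
  -- evaluate each piece
  have e1 : ∫ x in u1..a, u x = (a - u1) * lam := by
    rw [intervalIntegral.integral_congr (g := fun _ => lam) ?_,
        intervalIntegral.integral_const, smul_eq_mul]
    intro x hx
    rw [Set.uIcc_of_le (le_of_lt hu1)] at hx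
    simp only [hu, if_pos hx.2]
  have e3 : ∫ x in b..v1, u x = (v1 - b) * ρ := by
    rw [intervalIntegral.integral_congr_ae (g := fun _ => ρ) ?_,
        intervalIntegral.integral_const, smul_eq_mul]
    filter_upwards with x hx
    rw [Set.uIoc_of_le (le_of_lt hv1)] at hx
    simp only [hu, if_neg (not_le.2 (hab.trans hx.1)), if_neg (not_le.2 hx.1)]
  have e2 : ∫ x in a..b, u x = ∫ x in a..b, h2 x := by
    apply intervalIntegral.integral_congr
    intro x hx
    rw [Set.uIcc_of_le (le_of_lt hab)] at hx
    rw [hu]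
    rcases le_or_gt x a with h | h
    · rw [if_pos h, ← h2a, le_antisymm h hx.1]
    · rw [if_neg (not_le.2 h), if_pos hx.2]
  -- FTC for the middle piece
  set F : ℝ → ℝ := fun x => x/6 - (Real.sqrt (7 - 6*x))^3/54 with hF
  have emid : ∫ x in a..b, h2 x = F b - F a := by
    apply intervalIntegral.integral_eq_sub_of_hasDerivAt
    · intro x hx
      rw [Set.uIcc_of_le (le_of_lt hab)] at hx
      have hpos : 0 < 7 - 6*x := by
        have : 7 - 6*b = (6*r - 1)^2 := by rw [hb, hH]; ring
        nlinarith [hx.2, sq_nonneg (6*r - 1)]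
      have hinner : HasDerivAt (fun y : ℝ => 7 - 6*y) (-6) x := by
        simpa using ((hasDerivAt_id x).const_mul (6:ℝ)).const_sub 7
      have hsqrt : HasDerivAt (fun y : ℝ => Real.sqrt (7 - 6*y))
          (1 / (2 * Real.sqrt (7 - 6*x)) * (-6)) x :=
        (Real.hasDerivAt_sqrt (ne_of_gt hpos)).comp x hinner
      have hcube := (hsqrt.pow 3).div_const 54
      have hfin := ((hasDerivAt_id x).div_const 6).sub hcube
      convert hfin using 1
      case e'_8 => rfl
      have hs : 0 < Real.sqrt (7 - 6*x) := Real.sqrt_pos.2 hpos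
      have h2x : Real.sqrt (7 - 6*x) ^ 2 = 7 - 6*x := Real.sq_sqrt hpos.le
      rw [hh2]
      field_simp
      linear_combination
    · exact hch2.intervalIntegrable a b
  rw [e1, e2, e3, emid]
  have Fb : F b = b/6 - (6*r - 1)^3/54 := by simp only [hF]; rw [hsb]
  have Fa : F a = a/6 - (6*lam - 1)^3/54 := by simp only [hF]; rw [hsa]
  rw [Fb, Fa]
  simp only [ha, hb, hH, hG, hr]
  ring
end
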